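/- In the octonions O, let L_q : O → O denote left multiplication by q. Then the linear map [L_i, L_j] = L_i∘L_j - L_j∘L_i : O → O is injective (i.e., it is a regular element of so(8): its kernel is zero). -/

import Mathlib

open Quaternion

/-- The octonions, realized as pairs of quaternions via the Cayley–Dickson construction. -/
abbrev Octonion : Type := ℍ[ℝ] × ℍ[ℝ]

/-- Cayley–Dickson multiplication on the octonions. -/
noncomputable def omul (x y : Octonion) : Octonion :=
  (x.1 * y.1 - star y.2 * x.2, y.2 * x.1 + x.2 * star y.1)

/-- Left multiplication `L_q : O → O` by an octonion `q`, as an ℝ-linear map. -/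
noncomputable def LO (q : Octonion) : Octonion →ₗ[ℝ] Octonion where
  toFun x := omul q x
  map_add' x y := by
    simp only [omul, Prod.fst_add, Prod.snd_add, star_add, mul_add, add_mul, Prod.mk_add_mk]
    rw [Prod.mk.injEq]; constructor <;> abel
  map_smul' r x := by
    simp only [omul, Prod.smul_fst, Prod.smul_snd, Quaternion.star_smul, mul_smul_comm, smul_mul_assoc,
      RingHom.id_apply, Prod.smul_mk, star_trivial, smul_sub, smul_add]

/-- The standard imaginary unit `i` of the octonions. -/
noncomputable def iO : Octonion := ((⟨0, 1, 0, 0⟩ : ℍ[ℝ]), 0)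

/-- The standard imaginary unit `j` of the octonions. -/
noncomputable def jO : Octonion := ((⟨0, 0, 1, 0⟩ : ℍ[ℝ]), 0)

/-! For quaternions `a`, `b` the commutator `[L_(a,0), L_(b,0)]` acts on `(x₁, x₂)` by
`(x₁, x₂) ↦ ((ab - ba) x₁, x₂ (ba - ab))`, so it is injective as soon as `a` and `b` do not
commute, because `ℍ[ℝ]` is a division ring. For `a = i`, `b = j` we have `ij - ji = 2k ≠ 0`. -/

theorem LO_mk_zero_apply (a : ℍ[ℝ]) (x : Octonion) : LO (a, 0) x = (a * x.1, x.2 * a) := by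
  simp [LO, omul]

theorem LO_commutator_mk_zero_apply (a b : ℍ[ℝ]) (x : Octonion) :
    (LO (a, 0) ∘ₗ LO (b, 0) - LO (b, 0) ∘ₗ LO (a, 0)) x =
      ((a * b - b * a) * x.1, x.2 * (b * a - a * b)) := by
  simp only [LinearMap.sub_apply, LinearMap.comp_apply, LO_mk_zero_apply, Prod.mk_sub_mk,
    sub_mul, mul_sub, mul_assoc]

theorem injective_LO_commutator_mk_zero {a b : ℍ[ℝ]} (h : a * b ≠ b * a) :
    Function.Injective ⇑(LO (a, 0) ∘ₗ LO (b, 0) - LO (b, 0) ∘ₗ LO (a, 0)) := by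
  refine (injective_iff_map_eq_zero _).2 fun x hx => ?_
  rw [LO_commutator_mk_zero_apply, Prod.mk_eq_zero] at hx
  have hab : a * b - b * a ≠ 0 := sub_ne_zero.2 h
  have hba : b * a - a * b ≠ 0 := sub_ne_zero.2 h.symm
  exact Prod.ext ((mul_eq_zero.1 hx.1).resolve_left hab) ((mul_eq_zero.1 hx.2).resolve_right hba)

theorem iO_fst_mul_jO_fst_ne : iO.1 * jO.1 ≠ jO.1 * iO.1 := by
  intro h
  have hk := congrArg QuaternionAlgebra.imK h
  -- `imK_mul` must fire before `iO`, `jO` are unfolded: their literals are typed `ℍ[ℝ,-1,-1]`.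
  rw [Quaternion.imK_mul, Quaternion.imK_mul] at hk
  norm_num [iO, jO] at hk

theorem stmt_13 : Function.Injective ⇑(LO iO ∘ₗ LO jO - LO jO ∘ₗ LO iO) :=
  injective_LO_commutator_mk_zero iO_fst_mul_jO_fst_ne
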